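/- For every integer L ≥ 1, every K ∈ {1,…,L}, every ε > 0 and every s ∈ ℝ^L, the smoothed top-sum dominates the top-sum and the gap is controlled at rate ε: 0 ≤ topsum_{K,ε}(s) − topsum_K(s) ≤ ε · E[topsum_K(Z)]. -/

import Mathlib

open MeasureTheory ProbabilityTheory

/-- The list of coordinates of `s : ℝ^L` sorted in decreasing order. -/
noncomputable def descSort {L : ℕ} (s : Fin L → ℝ) : List ℝ :=
  (Multiset.sort (Multiset.map s Finset.univ.val) (· ≤ ·)).reverse

/-- `kthLargest K s` is the `K`-th largest coordinate of `s` (1-indexed), i.e. `s_(K)`. -/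
noncomputable def kthLargest {L : ℕ} (K : ℕ) (s : Fin L → ℝ) : ℝ :=
  (descSort s).getD (K - 1) 0

/-- `topsum K s` is the sum of the `K` largest coordinates of `s`,
with the convention `topsum 0 s = 0`. -/
noncomputable def topsum {L : ℕ} (K : ℕ) (s : Fin L → ℝ) : ℝ :=
  ((descSort s).take K).sum

/-- The standard Gaussian measure `N(0, Id_L)` on `ℝ^L`:
the coordinates are i.i.d. standard normal random variables. -/
noncomputable def stdGaussian (L : ℕ) : Measure (EuclideanSpace ℝ (Fin L)) :=
  (Measure.pi (fun _ : Fin L => gaussianReal 0 1)).map (MeasurableEquiv.toLp 2 (Fin L → ℝ))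

/-- The smoothed top-sum `topsumSm K ε s = E[topsum K (s + ε Z)]`, `Z ∼ N(0, Id_L)`. -/
noncomputable def topsumSm {L : ℕ} (K : ℕ) (ε : ℝ) (s : EuclideanSpace ℝ (Fin L)) : ℝ :=
  ∫ z, topsum K (s + ε • z) ∂(stdGaussian L)

/-- The smoothed top-K operator `topSm K ε s = topsumSm K ε s - topsumSm (K-1) ε s`. -/
noncomputable def topSm {L : ℕ} (K : ℕ) (ε : ℝ) (s : EuclideanSpace ℝ (Fin L)) : ℝ :=
  topsumSm K ε s - topsumSm (K - 1) ε s

/-- The 0/1 vector whose entries equal 1 exactly at the `K` coordinates carrying the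
`K` largest values of `v` (well defined when the `K`-th and `(K+1)`-th largest values
of `v` are distinct). -/
noncomputable def argtops {L : ℕ} (K : ℕ) (v : Fin L → ℝ) : Fin L → ℝ :=
  fun i => if kthLargest K v ≤ v i then 1 else 0


/-! `topsum K` is the maximum, over the `K`-element sets `S` of coordinates, of the linear forms
`v ↦ ∑ i ∈ S, v i`; hence it is subadditive and positively homogeneous. Pointwise this gives
`topsum K (s + ε z) ≤ topsum K s + ε topsum K z`, which integrates to the upper bound. For the lower
bound, Jensen's inequality for this convex function applied to the centred vector `s + ε Z` gives
`topsum K s = topsum K E[s + ε Z] ≤ E[topsum K (s + ε Z)]`. -/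

namespace List

variable {α : Type*} [AddCommMonoid α] [LinearOrder α] [IsOrderedAddMonoid α]

theorem sum_take_succ_le_add_sum_take {l : List α} {a : α} (hl : ∀ x ∈ l, x ≤ a) {n : ℕ}
    (hn : n < l.length) : (l.take (n + 1)).sum ≤ a + (l.take n).sum := by
  rw [sum_take_succ _ _ hn, add_comm]
  exact add_le_add (hl _ (getElem_mem hn)) le_rfl

theorem Sublist.sum_le_sum_take {l₁ l₂ : List α} (h : l₁ <+ l₂) (hl₂ : l₂.Pairwise (· ≥ ·)) :
    l₁.sum ≤ (l₂.take l₁.length).sum := by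
  induction h with
  | slnil => simp
  | @cons l₁ l₂ a h ih =>
    obtain ⟨hal₂, hl₂⟩ := pairwise_cons.mp hl₂
    cases l₁ with
    | nil => simp
    | cons b t =>
      have hlen : t.length < l₂.length := by simpa using h.length_le
      calc (b :: t).sum ≤ (l₂.take (t.length + 1)).sum := ih hl₂
        _ ≤ a + (l₂.take t.length).sum := sum_take_succ_le_add_sum_take hal₂ hlen
        _ = ((a :: l₂).take (b :: t).length).sum := by simp
  | @cons_cons l₁ l₂ a h ih =>
    simpa using add_le_add_right (ih hl₂.of_cons) a

end List

section topsum

variable {L K : ℕ}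

theorem coe_descSort (v : Fin L → ℝ) :
    ((descSort v : List ℝ) : Multiset ℝ) = Multiset.map v Finset.univ.val := by
  rw [descSort, Multiset.coe_reverse, Multiset.sort_eq]

theorem pairwise_descSort (v : Fin L → ℝ) : (descSort v).Pairwise (· ≥ ·) :=
  List.pairwise_reverse.2 (Multiset.pairwise_sort _ _)

theorem length_descSort (v : Fin L → ℝ) : (descSort v).length = L := by
  simp [descSort]

theorem sum_le_topsum (v : Fin L → ℝ) {S : Finset (Fin L)} (hS : S.card = K) :
    ∑ i ∈ S, v i ≤ topsum K v := by
  set l := (Multiset.sort (S.val.map v) (· ≤ ·)).reverse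
  have hl : (l : Multiset ℝ) = S.val.map v := by
    rw [Multiset.coe_reverse, Multiset.sort_eq]
  have hsub : l.Sublist (descSort v) := by
    refine List.sublist_of_subperm_of_pairwise ?_
      (List.pairwise_reverse.2 (Multiset.pairwise_sort _ _)) (pairwise_descSort v)
    rw [← Multiset.coe_le, hl, coe_descSort]
    exact Multiset.map_le_map (Finset.val_le_iff.mpr (Finset.subset_univ S))
  have hlen : l.length = K := by
    rw [List.length_reverse, Multiset.length_sort, Multiset.card_map, Finset.card_val, hS]
  have hsum : l.sum = ∑ i ∈ S, v i := by
    rw [← Multiset.sum_coe, hl]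
    rfl
  simpa only [topsum, hlen, hsum] using hsub.sum_le_sum_take (pairwise_descSort v)

theorem exists_sum_eq_topsum (hKL : K ≤ L) (v : Fin L → ℝ) :
    ∃ S : Finset (Fin L), S.card = K ∧ ∑ i ∈ S, v i = topsum K v := by
  classical
  have hperm : (descSort v).Perm (Finset.univ.toList.map v) := by
    rw [← Multiset.coe_eq_coe, coe_descSort]
    simp [← Multiset.map_coe, Finset.coe_toList]
  obtain ⟨l, hlp, hls⟩ := ((List.take_sublist K _).subperm).trans hperm.subperm
  obtain ⟨I, hIs, rfl⟩ := List.sublist_map_iff.mp hls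
  have hI : I.Nodup := Finset.univ.nodup_toList.sublist hIs
  refine ⟨I.toFinset, ?_, ?_⟩
  · rw [List.toFinset_card_of_nodup hI, ← List.length_map (f := v), hlp.length_eq,
      List.length_take, length_descSort, min_eq_left hKL]
  · rw [topsum, List.sum_toFinset v hI, hlp.sum_eq]

theorem topsum_eq_sup' (hKL : K ≤ L) (v : Fin L → ℝ) :
    topsum K v = (Finset.univ.powersetCard K).sup'
      (Finset.powersetCard_nonempty.2 (by simpa using hKL)) (fun S => ∑ i ∈ S, v i) := by
  obtain ⟨S, hS, hsum⟩ := exists_sum_eq_topsum hKL v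
  refine le_antisymm ?_
    (Finset.sup'_le _ _ fun T hT => sum_le_topsum v (Finset.mem_powersetCard.1 hT).2)
  rw [← hsum]
  exact Finset.le_sup' (fun T => ∑ i ∈ T, v i)
    (Finset.mem_powersetCard.2 ⟨Finset.subset_univ S, hS⟩)

theorem continuous_topsum (hKL : K ≤ L) : Continuous (topsum K : (Fin L → ℝ) → ℝ) := by
  simp_rw [funext (topsum_eq_sup' hKL)]
  exact Continuous.finset_sup'_apply _ fun S _ =>
    continuous_finsetSum _ fun i _ => continuous_apply i

theorem topsum_add_le (hKL : K ≤ L) (a b : Fin L → ℝ) :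
    topsum K (a + b) ≤ topsum K a + topsum K b := by
  obtain ⟨S, hS, hsum⟩ := exists_sum_eq_topsum hKL (a + b)
  rw [← hsum]
  simpa only [Pi.add_apply, Finset.sum_add_distrib] using
    add_le_add (sum_le_topsum a hS) (sum_le_topsum b hS)

theorem topsum_smul (hKL : K ≤ L) {c : ℝ} (hc : 0 ≤ c) (v : Fin L → ℝ) :
    topsum K (c • v) = c * topsum K v := by
  obtain ⟨S, hS, hsum⟩ := exists_sum_eq_topsum hKL (c • v)
  obtain ⟨T, hT, hsum'⟩ := exists_sum_eq_topsum hKL v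
  refine le_antisymm ?_ ?_
  · rw [← hsum]
    simpa only [Pi.smul_apply, smul_eq_mul, ← Finset.mul_sum] using
      mul_le_mul_of_nonneg_left (sum_le_topsum v hS) hc
  · rw [← hsum', Finset.mul_sum]
    exact sum_le_topsum (c • v) hT

theorem topsum_add_smul_le (hKL : K ≤ L) {c : ℝ} (hc : 0 ≤ c) (a v : Fin L → ℝ) :
    topsum K (a + c • v) ≤ topsum K a + c * topsum K v :=
  (topsum_add_le hKL a (c • v)).trans_eq (by rw [topsum_smul hKL hc])

theorem abs_topsum_le (hKL : K ≤ L) (v : EuclideanSpace ℝ (Fin L)) : |topsum K v| ≤ K * ‖v‖ := by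
  obtain ⟨S, hS, hsum⟩ := exists_sum_eq_topsum hKL v
  calc |topsum K v| ≤ ∑ i ∈ S, |v i| := hsum ▸ Finset.abs_sum_le_sum_abs _ _
    _ ≤ ∑ i ∈ S, ‖v‖ := Finset.sum_le_sum fun i _ => PiLp.norm_apply_le v i
    _ = K * ‖v‖ := by rw [Finset.sum_const, hS, nsmul_eq_mul]

variable {X : Type*} [MeasurableSpace X] {μ : Measure X} {f : X → EuclideanSpace ℝ (Fin L)}

theorem MeasureTheory.Integrable.topsum (hKL : K ≤ L) (hf : Integrable f μ) :
    Integrable (fun x => topsum K (f x)) μ :=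
  Integrable.mono' (hf.norm.const_mul K)
    (((continuous_topsum hKL).comp (PiLp.continuous_ofLp 2 _)).comp_aestronglyMeasurable hf.1)
    (ae_of_all _ fun x => abs_topsum_le hKL (f x))

theorem topsum_integral_le (hKL : K ≤ L) (hf : Integrable f μ) :
    topsum K (∫ x, f x ∂μ : EuclideanSpace ℝ (Fin L)) ≤ ∫ x, topsum K (f x) ∂μ := by
  obtain ⟨S, hS, hsum⟩ := exists_sum_eq_topsum hKL (∫ x, f x ∂μ : EuclideanSpace ℝ (Fin L))
  have hf_apply (i : Fin L) : Integrable (fun x => f x i) μ :=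
    (EuclideanSpace.proj (𝕜 := ℝ) i).integrable_comp hf
  have hintegral_apply (i : Fin L) : (∫ x, f x ∂μ) i = ∫ x, f x i ∂μ :=
    ((EuclideanSpace.proj (𝕜 := ℝ) i).integral_comp_comm hf).symm
  calc topsum K (∫ x, f x ∂μ : EuclideanSpace ℝ (Fin L)) = ∫ x, ∑ i ∈ S, f x i ∂μ := by
        rw [← hsum, integral_finsetSum _ fun i _ => hf_apply i]
        simp only [hintegral_apply]
    _ ≤ ∫ x, topsum K (f x) ∂μ :=
        integral_mono (integrable_finsetSum _ fun i _ => hf_apply i) (hf.topsum hKL)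
          fun x => sum_le_topsum _ hS

end topsum

theorem stdGaussian_eq_stdGaussian_euclideanSpace (L : ℕ) :
    _root_.stdGaussian L = ProbabilityTheory.stdGaussian (EuclideanSpace ℝ (Fin L)) :=
  map_pi_eq_stdGaussian

instance (L : ℕ) : IsGaussian (_root_.stdGaussian L) := by
  rw [stdGaussian_eq_stdGaussian_euclideanSpace]
  infer_instance

theorem topsumSm_sub_topsum_bounds_general (L K : ℕ) (hKL : K ≤ L)
    (ε : ℝ) (hε : 0 < ε) (s : EuclideanSpace ℝ (Fin L)) :
    0 ≤ topsumSm K ε s - topsum K s ∧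
    topsumSm K ε s - topsum K s ≤
      ε * ∫ z : EuclideanSpace ℝ (Fin L), topsum K z ∂(stdGaussian L) := by
  have hZ : Integrable (fun z => z) (stdGaussian L) := IsGaussian.integrable_id
  have hεZ : Integrable (fun z => ε • z) (stdGaussian L) := hZ.smul ε
  have hshift : Integrable (fun z => s + ε • z) (stdGaussian L) := (integrable_const s).add hεZ
  have hmean : ∫ z, s + ε • z ∂(stdGaussian L) = s := by
    rw [integral_add (integrable_const s) hεZ, integral_smul,
      stdGaussian_eq_stdGaussian_euclideanSpace, integral_id_stdGaussian]
    simp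
  refine ⟨sub_nonneg.2 ?_, sub_le_iff_le_add'.2 ?_⟩
  · calc topsum K s = topsum K (∫ z, s + ε • z ∂(stdGaussian L) : EuclideanSpace ℝ (Fin L)) := by
          rw [hmean]
      _ ≤ topsumSm K ε s := topsum_integral_le hKL hshift
  · calc topsumSm K ε s ≤ ∫ z, topsum K s + ε * topsum K z ∂(stdGaussian L) :=
          integral_mono (hshift.topsum hKL)
            ((integrable_const _).add ((hZ.topsum hKL).const_mul ε))
            fun z => topsum_add_smul_le hKL hε.le s z
      _ = topsum K s + ε * ∫ z, topsum K z ∂(stdGaussian L) := by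
          rw [integral_add (integrable_const _) ((hZ.topsum hKL).const_mul ε), integral_const_mul]
          simp

/-- `0 ≤ topsumSm K ε s - topsum K s ≤ ε · E[topsum K Z]`. -/
theorem topsumSm_sub_topsum_bounds (L K : ℕ) (hL : 1 ≤ L) (hK1 : 1 ≤ K) (hKL : K ≤ L)
    (ε : ℝ) (hε : 0 < ε) (s : EuclideanSpace ℝ (Fin L)) :
    0 ≤ topsumSm K ε s - topsum K s ∧
    topsumSm K ε s - topsum K s ≤
      ε * ∫ z : EuclideanSpace ℝ (Fin L), topsum K z ∂(stdGaussian L) :=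
  topsumSm_sub_topsum_bounds_general L K hKL ε hε s
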